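/- arXiv:2104.13310 — 2 statements merged into one kernel-verified Lean document; each statement's English description precedes it below -/
import Mathlib

section
/- Let p be a prime, let g be a unit of ZMod p that generates the group of units (ZMod p)ˣ, let q be a prime with q ∣ p - 1, let r be a natural number with q ∣ r, and let γ be a unit of ZMod p such that g ^ r = γ ^ q. Then there exists a natural number k < q such that g ^ (r / q + k * ((p - 1) / q)) = γ. -/
/-!
Let `s = (p - 1) / q`. Since `(g ^ (r / q)) ^ q = g ^ r = γ ^ q`, the quotient `γ / g ^ (r / q)` is a
`q`-th root of unity, and in the cyclic group generated by `g`, of order `q * s`, these are exactly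
the powers `(g ^ s) ^ k` with `k < q`.
-/

theorem exists_lt_pow_mul_eq_of_pow_eq_one {G : Type*} [Group G] {g δ : G} {q s : ℕ}
    (hord : orderOf g = q * s) (hpos : 0 < q * s) (hδ : δ ∈ Subgroup.zpowers g)
    (hδq : δ ^ q = 1) : ∃ k < q, g ^ (k * s) = δ := by
  classical
  have hfin : IsOfFinOrder g := orderOf_pos_iff.mp (hord ▸ hpos)
  obtain ⟨m, hm, rfl⟩ := Finset.mem_image.mp (hfin.mem_zpowers_iff_mem_range_orderOf.mp hδ)
  rw [Finset.mem_range, hord] at hm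
  have hdvd : q * s ∣ q * m := by
    rw [← hord, orderOf_dvd_iff_pow_eq_one, mul_comm, pow_mul, hδq]
  obtain ⟨k, rfl⟩ := (Nat.mul_dvd_mul_iff_left (Nat.pos_of_mul_pos_right hpos)).mp hdvd
  exact ⟨k, by nlinarith, by rw [mul_comm]⟩

theorem traceback_step_general {p : ℕ} [Fact p.Prime] (g : (ZMod p)ˣ)
    (hg : ∀ x : (ZMod p)ˣ, x ∈ Subgroup.zpowers g)
    {q : ℕ} (hqp : q ∣ p - 1)
    {r : ℕ} (hr : q ∣ r) (γ : (ZMod p)ˣ) (h : g ^ r = γ ^ q) :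
    ∃ k : ℕ, k < q ∧ g ^ (r / q + k * ((p - 1) / q)) = γ := by
  have hord : orderOf g = q * ((p - 1) / q) := by
    rw [orderOf_eq_card_of_forall_mem_zpowers hg, Nat.card_eq_fintype_card, ZMod.card_units,
      Nat.mul_div_cancel' hqp]
  have hpos : 0 < q * ((p - 1) / q) := by
    rw [Nat.mul_div_cancel' hqp]
    exact Nat.sub_pos_of_lt (Fact.out : p.Prime).one_lt
  have hroot : (γ * (g ^ (r / q))⁻¹) ^ q = 1 := by
    rw [mul_pow, inv_pow, ← pow_mul, Nat.div_mul_cancel hr, ← h, mul_inv_cancel]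
  obtain ⟨k, hkq, hk⟩ := exists_lt_pow_mul_eq_of_pow_eq_one hord hpos (hg _) hroot
  exact ⟨k, hkq, by rw [pow_add, hk, mul_inv_cancel_comm_assoc]⟩

theorem traceback_step {p : ℕ} [Fact p.Prime] (g : (ZMod p)ˣ)
    (hg : ∀ x : (ZMod p)ˣ, x ∈ Subgroup.zpowers g)
    {q : ℕ} (hq : q.Prime) (hqp : q ∣ p - 1)
    {r : ℕ} (hr : q ∣ r) (γ : (ZMod p)ˣ) (h : g ^ r = γ ^ q) :
    ∃ k : ℕ, k < q ∧ g ^ (r / q + k * ((p - 1) / q)) = γ :=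
  traceback_step_general g hg hqp hr γ h
end

section
/- Let p be a prime, let g be a unit of ZMod p that generates the group of units (ZMod p)ˣ, let q be a prime with q ∣ p - 1, let r be a natural number with q ∣ r, and let γ be a unit of ZMod p such that g ^ r = γ ^ q. Then there exists a unique natural number k < q such that g ^ (r / q + k * ((p - 1) / q)) = γ. -/
/-!
Put `x = g ^ ((p - 1) / q)`, an element of order exactly `q`. The quotient `y = g ^ (-(r / q)) * γ`
satisfies `y ^ q = 1`, and in the cyclic group generated by `g` the solutions of `y ^ q = 1` are
exactly the powers of `x`. Hence `y = x ^ k` for exactly one `k < q`, which is the claim since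
`g ^ (r / q + k * ((p - 1) / q)) = g ^ (r / q) * x ^ k`.
-/

open Subgroup

section

variable {G : Type*} [Group G]

theorem mem_zpowers_pow_orderOf_div_of_pow_eq_one {g y : G} {q : ℕ} (hg : orderOf g ≠ 0)
    (hq : q ∣ orderOf g) (hy : y ∈ zpowers g) (hyq : y ^ q = 1) :
    y ∈ zpowers (g ^ (orderOf g / q)) := by
  obtain ⟨a, rfl⟩ := mem_zpowers_iff.mp hy
  have hq0 : (q : ℤ) ≠ 0 := Nat.cast_ne_zero.mpr (ne_zero_of_dvd_ne_zero hg hq)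
  have hdvd : (orderOf g : ℤ) ∣ a * q :=
    orderOf_dvd_iff_zpow_eq_one.mpr (by rw [zpow_mul, zpow_natCast, hyq])
  rw [← Nat.div_mul_cancel hq, Nat.cast_mul] at hdvd
  obtain ⟨b, rfl⟩ := (mul_dvd_mul_iff_right hq0).mp hdvd
  exact ⟨b, by dsimp only; rw [zpow_mul, zpow_natCast]⟩

theorem IsOfFinOrder.existsUnique_lt_orderOf_pow_eq {x y : G} (hx : IsOfFinOrder x)
    (hy : y ∈ zpowers x) : ∃! k : ℕ, k < orderOf x ∧ x ^ k = y := by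
  classical
  obtain ⟨k, hk, rfl⟩ := Finset.mem_image.mp (hx.mem_zpowers_iff_mem_range_orderOf.mp hy)
  exact ⟨k, ⟨Finset.mem_range.mp hk, rfl⟩, fun m ⟨hm, hmk⟩ ↦
    pow_injOn_Iio_orderOf hm (Finset.mem_range.mp hk) hmk⟩

theorem existsUnique_lt_pow_add_mul_orderOf_div_eq {g γ : G} (hg : orderOf g ≠ 0)
    (hγ : γ ∈ zpowers g) {q r : ℕ} (hq : q ∣ orderOf g) (hr : q ∣ r) (h : g ^ r = γ ^ q) :
    ∃! k : ℕ, k < q ∧ g ^ (r / q + k * (orderOf g / q)) = γ := by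
  set x := g ^ (orderOf g / q)
  set y := (g ^ (r / q))⁻¹ * γ
  have hcomm : Commute (g ^ (r / q))⁻¹ γ := by
    obtain ⟨a, rfl⟩ := mem_zpowers_iff.mp hγ
    exact ((Commute.refl g).pow_left _).inv_left.zpow_right a
  have hyq : y ^ q = 1 := by
    rw [hcomm.mul_pow, inv_pow, ← pow_mul, Nat.div_mul_cancel hr, h, inv_mul_cancel]
  have hyx : y ∈ zpowers x :=
    mem_zpowers_pow_orderOf_div_of_pow_eq_one hg hq
      (mul_mem (inv_mem (pow_mem (mem_zpowers g) _)) hγ) hyq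
  have hx : orderOf x = q := orderOf_pow_orderOf_div hg hq
  have hshift (k : ℕ) : g ^ (r / q + k * (orderOf g / q)) = γ ↔ x ^ k = y := by
    rw [pow_add, pow_mul', eq_inv_mul_iff_mul_eq]
  have hxfin : IsOfFinOrder x := (orderOf_pos_iff.mp (Nat.pos_of_ne_zero hg)).pow
  simpa only [hshift, hx] using hxfin.existsUnique_lt_orderOf_pow_eq hyx

end

theorem traceback_step_unique_general {p : ℕ} [Fact p.Prime] (g : (ZMod p)ˣ)
    (hg : ∀ x : (ZMod p)ˣ, x ∈ Subgroup.zpowers g)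
    {q : ℕ} (hqp : q ∣ p - 1)
    {r : ℕ} (hr : q ∣ r) (γ : (ZMod p)ˣ) (h : g ^ r = γ ^ q) :
    ∃! k : ℕ, k < q ∧ g ^ (r / q + k * ((p - 1) / q)) = γ := by
  have hord : orderOf g = p - 1 := by
    rw [orderOf_eq_card_of_forall_mem_zpowers hg, Nat.card_eq_fintype_card, ZMod.card_units]
  rw [← hord] at hqp ⊢
  exact existsUnique_lt_pow_add_mul_orderOf_div_eq (orderOf_pos g).ne' (hg γ) hqp hr h

theorem traceback_step_unique {p : ℕ} [Fact p.Prime] (g : (ZMod p)ˣ)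
    (hg : ∀ x : (ZMod p)ˣ, x ∈ Subgroup.zpowers g)
    {q : ℕ} (hq : q.Prime) (hqp : q ∣ p - 1)
    {r : ℕ} (hr : q ∣ r) (γ : (ZMod p)ˣ) (h : g ^ r = γ ^ q) :
    ∃! k : ℕ, k < q ∧ g ^ (r / q + k * ((p - 1) / q)) = γ :=
  traceback_step_unique_general g hg hqp hr γ h
end
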